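/- Let B(x) = a_c + Σ_{m=0}^{L} a_m T_{p^m}(x) with p ≥ 2, and define σ(N) = (1/N)(⟨B²⟩−⟨B⟩²) + (2/N²) Σ_{l=1}^{N}(N−l)(⟨B·B_l⟩−⟨B⟩²) where B_l(x) = B(T_{p^l}(x)). Then for N ≥ L, σ(N) = (1/(2N))(Σ_{m=0}^{L} a_m)² − (1/N²) Σ_{l=1}^{L} Σ_{m=l}^{L} l·a_m·a_{m−l}. -/

import Mathlib

/-!
Substituting `x = cos θ` turns the weighted average into `⟨f⟩ = π⁻¹ ∫₀^π f (cos θ) dθ`, under which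
`T_n (cos θ) = cos (n θ)`: hence `⟨T_n⟩ = 0` and `⟨T_n T_k⟩ = δ_{nk} / 2` for `n, k ≥ 1`.
Since `T_{p^m} ∘ T_{p^l} = T_{p^(m+l)}`, the shifted function is
`B_l = a_c + ∑ a_m T_{p^(m+l)}`, and as `p ≥ 2` makes the frequencies `p^k` distinct,
`⟨B⟩ = a_c` and `⟨B B_l⟩ - ⟨B⟩² = c_l / 2` with `c_l = ∑_{m=l}^L a_m a_(m-l)`.
The lags `c_l` vanish for `l > L` and satisfy `(∑ a_m)² = c_0 + 2 ∑_{l ≥ 1} c_l`;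
substituting these into `σ(N)` gives the closed form.
-/

open Polynomial Polynomial.Chebyshev MeasureTheory Finset

theorem integral_const_add_mul_const_add {α : Type*} [MeasurableSpace α] {μ : Measure α}
    [IsFiniteMeasure μ] {U V : α → ℝ} (hU : Integrable U μ) (hV : Integrable V μ)
    (hUV : Integrable (fun x => U x * V x) μ) (hU₀ : ∫ x, U x ∂μ = 0) (hV₀ : ∫ x, V x ∂μ = 0)
    (c d : ℝ) :
    ∫ x, (c + U x) * (d + V x) ∂μ = μ.real Set.univ * (c * d) + ∫ x, U x * V x ∂μ := by
  have expand : ∀ x, (c + U x) * (d + V x) = c * d + (c * V x + (d * U x + U x * V x)) :=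
    fun x => by ring
  simp_rw [expand]
  rw [integral_add (integrable_const _) (by fun_prop), integral_add (by fun_prop) (by fun_prop),
    integral_add (by fun_prop) hUV,
    integral_const, integral_const_mul, integral_const_mul, hU₀, hV₀, smul_eq_mul]
  ring

namespace Polynomial.Chebyshev
open Real

theorem setIntegral_Icc_div_pi_sqrt_eq_integral_measureT (f : ℝ → ℝ) :
    ∫ x in Set.Icc (-1 : ℝ) 1, f x * (1 / (π * √(1 - x ^ 2))) = (∫ x, f x ∂measureT) / π := by
  rw [integral_measureT, intervalIntegral.integral_of_le (by norm_num),
    integral_Icc_eq_integral_Ioc, ← integral_div]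
  refine setIntegral_congr_fun measurableSet_Ioc fun x _ => ?_
  rw [Real.sqrt_inv]
  field_simp

theorem eval_T_eval_T {R : Type*} [CommRing R] (m n : ℕ) (x : R) :
    (T R m).eval ((T R n).eval x) = (T R (m * n : ℕ)).eval x := by
  rw [← eval_comp, ← T_mul, Nat.cast_mul]

theorem integral_eval_T_real_mul_eval_T_real_measureT_of_ne_zero {n m : ℕ} (hn : n ≠ 0) :
    ∫ x, (T ℝ n).eval x * (T ℝ m).eval x ∂measureT = if n = m then π / 2 else 0 := by
  split_ifs with h
  · subst h; exact integral_T_real_mul_self_measureT_of_ne_zero hn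
  · exact integral_eval_T_real_mul_eval_T_real_measureT_of_ne h

variable {ι κ : Type*}

theorem integral_sum_mul_eval_T_real_measureT (s : Finset ι) (f : ι → ℝ) (n : ι → ℕ)
    (hn : ∀ i ∈ s, n i ≠ 0) : ∫ x, ∑ i ∈ s, f i * (T ℝ (n i)).eval x ∂measureT = 0 := by
  rw [integral_finsetSum _ fun i _ => integrable_measureT (by fun_prop)]
  refine sum_eq_zero fun i hi => ?_
  rw [integral_const_mul, integral_eval_T_real_measureT_of_ne_zero (by exact_mod_cast hn i hi),
    mul_zero]

theorem integral_sum_mul_eval_T_real_mul_sum_measureT (s : Finset ι) (t : Finset κ)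
    (f : ι → ℝ) (g : κ → ℝ) (n : ι → ℕ) (m : κ → ℕ) (hn : ∀ i ∈ s, n i ≠ 0) :
    ∫ x, (∑ i ∈ s, f i * (T ℝ (n i)).eval x) * (∑ j ∈ t, g j * (T ℝ (m j)).eval x) ∂measureT
      = π / 2 * ∑ i ∈ s, ∑ j ∈ t, if n i = m j then f i * g j else 0 := by
  simp_rw [sum_mul_sum, mul_mul_mul_comm]
  rw [integral_finsetSum _ fun i _ => integrable_measureT (by fun_prop), mul_sum]
  refine sum_congr rfl fun i hi => ?_
  rw [integral_finsetSum _ fun j _ => integrable_measureT (by fun_prop), mul_sum]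
  refine sum_congr rfl fun j _ => ?_
  rw [integral_const_mul, integral_eval_T_real_mul_eval_T_real_measureT_of_ne_zero (hn i hi)]
  split_ifs <;> ring

instance isFiniteMeasure_measureT : IsFiniteMeasure measureT :=
  (integrable_const_iff.mp (integrable_measureT (continuousOn_const (c := (1 : ℝ))))).resolve_left
    one_ne_zero

theorem measureReal_univ_measureT : measureT.real Set.univ = π := by
  simpa using integral_eval_T_real_measureT_zero

theorem integral_const_add_sum_measureT (c : ℝ) (s : Finset ι) (f : ι → ℝ) (n : ι → ℕ)
    (hn : ∀ i ∈ s, n i ≠ 0) :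
    ∫ x, (c + ∑ i ∈ s, f i * (T ℝ (n i)).eval x) ∂measureT = π * c := by
  rw [integral_add (integrable_const c) (integrable_measureT (by fun_prop)), integral_const,
    measureReal_univ_measureT, integral_sum_mul_eval_T_real_measureT s f n hn, smul_eq_mul,
    add_zero]

theorem integral_const_add_sum_mul_const_add_sum_measureT (c d : ℝ) (s : Finset ι)
    (t : Finset κ) (f : ι → ℝ) (g : κ → ℝ) (n : ι → ℕ) (m : κ → ℕ)
    (hn : ∀ i ∈ s, n i ≠ 0) (hm : ∀ j ∈ t, m j ≠ 0) :
    ∫ x, (c + ∑ i ∈ s, f i * (T ℝ (n i)).eval x) * (d + ∑ j ∈ t, g j * (T ℝ (m j)).eval x)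
      ∂measureT
      = π * (c * d + (∑ i ∈ s, ∑ j ∈ t, if n i = m j then f i * g j else 0) / 2) := by
  rw [integral_const_add_mul_const_add (integrable_measureT (by fun_prop))
    (integrable_measureT (by fun_prop)) (integrable_measureT (by fun_prop))
    (integral_sum_mul_eval_T_real_measureT s f n hn)
    (integral_sum_mul_eval_T_real_measureT t g m hm),
    measureReal_univ_measureT, integral_sum_mul_eval_T_real_mul_sum_measureT s t f g n m hn]
  ring

end Polynomial.Chebyshev

def autocorr (a : ℕ → ℝ) (L l : ℕ) : ℝ := ∑ m ∈ Icc l L, a m * a (m - l)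

theorem autocorr_zero (a : ℕ → ℝ) (L : ℕ) : autocorr a L 0 = ∑ m ∈ range (L + 1), a m ^ 2 := by
  simp [autocorr, Nat.range_succ_eq_Icc_zero, sq]

theorem autocorr_of_lt {L l : ℕ} (a : ℕ → ℝ) (h : L < l) : autocorr a L l = 0 := by
  simp [autocorr, Icc_eq_empty_of_lt h]

theorem sum_Icc_autocorr (a : ℕ → ℝ) (L : ℕ) :
    ∑ l ∈ Icc 1 L, autocorr a L l = ∑ m ∈ range (L + 1), ∑ k ∈ range m, a m * a k := by
  simp only [autocorr, sum_sigma']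
  refine sum_nbij' (fun q => ⟨q.2, q.2 - q.1⟩) (fun q => ⟨q.1 - q.2, q.1⟩) ?_ ?_ ?_ ?_ ?_ <;>
    rintro ⟨x, y⟩ h <;>
    simp only [mem_sigma, mem_Icc, mem_range, Sigma.mk.injEq, heq_eq_eq, and_true,
      true_and] at h ⊢ <;>
    omega

theorem sq_sum_range (a : ℕ → ℝ) (n : ℕ) :
    (∑ m ∈ range n, a m) ^ 2
      = ∑ m ∈ range n, a m ^ 2 + 2 * ∑ m ∈ range n, ∑ k ∈ range m, a m * a k := by
  induction n with
  | zero => simp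
  | succ n ih =>
    simp only [sum_range_succ, add_sq, ih, ← mul_sum]
    ring

theorem sq_sum_range_eq_autocorr (a : ℕ → ℝ) (L : ℕ) :
    (∑ m ∈ range (L + 1), a m) ^ 2 = autocorr a L 0 + 2 * ∑ l ∈ Icc 1 L, autocorr a L l := by
  rw [sq_sum_range, autocorr_zero, sum_Icc_autocorr]

theorem sum_sum_ite_pow_eq_pow_add (a : ℕ → ℝ) {p : ℕ} (hp : 2 ≤ p) (L l : ℕ) :
    ∑ i ∈ range (L + 1), ∑ j ∈ range (L + 1), (if p ^ i = p ^ (j + l) then a i * a j else 0)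
      = autocorr a L l := by
  simp only [(Nat.pow_right_injective hp).eq_iff]
  rw [sum_comm]
  simp only [sum_ite_eq', ← sum_filter]
  refine sum_nbij' (· + l) (· - l) ?_ ?_ ?_ ?_ ?_ <;> intro j hj <;>
    simp only [mem_filter, mem_Icc, mem_range, Nat.add_sub_cancel] at hj ⊢ <;>
    omega

theorem variance_sum_autocorr_eq (a : ℕ → ℝ) {L N : ℕ} (hN : L ≤ N) :
    (1 / (N : ℝ)) * (autocorr a L 0 / 2)
        + (2 / (N : ℝ) ^ 2) * ∑ l ∈ Icc 1 N, ((N : ℝ) - (l : ℝ)) * (autocorr a L l / 2)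
      = (1 / (2 * (N : ℝ))) * (∑ m ∈ range (L + 1), a m) ^ 2
        - (1 / (N : ℝ) ^ 2) * ∑ l ∈ Icc 1 L, ∑ m ∈ Icc l L, (l : ℝ) * a m * a (m - l) := by
  have htrunc : ∑ l ∈ Icc 1 N, ((N : ℝ) - l) * (autocorr a L l / 2)
      = ∑ l ∈ Icc 1 L, ((N : ℝ) - l) * (autocorr a L l / 2) := by
    refine (sum_subset (Icc_subset_Icc_right hN) fun l hl hlL => ?_).symm
    rw [autocorr_of_lt a (by simp only [mem_Icc] at hl hlL; omega), zero_div, mul_zero]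
  have hsplit : ∑ l ∈ Icc 1 L, ((N : ℝ) - l) * (autocorr a L l / 2)
      = (N * ∑ l ∈ Icc 1 L, autocorr a L l - ∑ l ∈ Icc 1 L, l * autocorr a L l) / 2 := by
    rw [mul_sum, ← sum_sub_distrib, sum_div]
    exact sum_congr rfl fun l _ => by ring
  have hlag : ∀ l, ∑ m ∈ Icc l L, (l : ℝ) * a m * a (m - l) = l * autocorr a L l := by
    simp [autocorr, mul_sum, mul_assoc]
  have hN : (N : ℝ) / N ^ 2 = 1 / N := by rw [sq, div_self_mul_self', one_div]
  rw [htrunc, hsplit, sq_sum_range_eq_autocorr]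
  simp_rw [hlag]
  linear_combination (∑ l ∈ Icc 1 L, autocorr a L l) * hN

theorem chebyshev_error_variance_formula_general
    (L : ℕ) (ac : ℝ) (a : ℕ → ℝ) (p : ℕ) (hp : 2 ≤ p)
    (B : ℝ → ℝ)
    (hB : ∀ x, B x = ac + ∑ m ∈ range (L + 1), a m * (T ℝ (p ^ m : ℕ)).eval x)
    (σ : ℕ → ℝ)
    (hσ : ∀ N : ℕ, σ N =
      (1 / (N : ℝ)) *
        ((∫ x in Set.Icc (-1 : ℝ) 1, B x ^ 2 * (1 / (Real.pi * Real.sqrt (1 - x ^ 2))))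
          - (∫ x in Set.Icc (-1 : ℝ) 1, B x * (1 / (Real.pi * Real.sqrt (1 - x ^ 2)))) ^ 2)
      + (2 / (N : ℝ) ^ 2) * ∑ l ∈ Icc 1 N, ((N : ℝ) - (l : ℝ)) *
          ((∫ x in Set.Icc (-1 : ℝ) 1,
              B x * B ((T ℝ (p ^ l : ℕ)).eval x) * (1 / (Real.pi * Real.sqrt (1 - x ^ 2))))
            - (∫ x in Set.Icc (-1 : ℝ) 1, B x * (1 / (Real.pi * Real.sqrt (1 - x ^ 2)))) ^ 2))
    (N : ℕ) (hN : L ≤ N) :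
    σ N = (1 / (2 * (N : ℝ))) * (∑ m ∈ range (L + 1), a m) ^ 2
      - (1 / (N : ℝ) ^ 2) * ∑ l ∈ Icc 1 L, ∑ m ∈ Icc l L, (l : ℝ) * a m * a (m - l) := by
  have hpow : ∀ k, p ^ k ≠ 0 := fun k => pow_ne_zero k (by omega)
  have hBT : ∀ l x, B ((T ℝ (p ^ l : ℕ)).eval x)
      = ac + ∑ m ∈ range (L + 1), a m * (T ℝ (p ^ (m + l) : ℕ)).eval x := by
    intro l x
    simp only [hB, eval_T_eval_T, pow_add]
  have hmean : ∫ x in Set.Icc (-1 : ℝ) 1, B x * (1 / (Real.pi * Real.sqrt (1 - x ^ 2))) = ac := by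
    rw [setIntegral_Icc_div_pi_sqrt_eq_integral_measureT]
    simp only [hB]
    rw [integral_const_add_sum_measureT _ _ _ _ fun m _ => hpow m]
    field_simp
  have hcorr : ∀ l, ∫ x in Set.Icc (-1 : ℝ) 1,
      B x * B ((T ℝ (p ^ l : ℕ)).eval x) * (1 / (Real.pi * Real.sqrt (1 - x ^ 2)))
        = ac ^ 2 + autocorr a L l / 2 := by
    intro l
    rw [setIntegral_Icc_div_pi_sqrt_eq_integral_measureT]
    simp only [hBT, hB]
    rw [integral_const_add_sum_mul_const_add_sum_measureT _ _ _ _ _ _ _ _ (fun m _ => hpow m)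
      (fun m _ => hpow (m + l)), sum_sum_ite_pow_eq_pow_add a hp]
    field_simp
  have hsq : ∫ x in Set.Icc (-1 : ℝ) 1, B x ^ 2 * (1 / (Real.pi * Real.sqrt (1 - x ^ 2)))
      = ac ^ 2 + autocorr a L 0 / 2 := by
    -- the lag-0 shift is `T_(p^0) = T_1 = X`
    simpa [sq] using hcorr 0
  rw [hσ, hsq, hmean]
  simp_rw [hcorr, add_sub_cancel_left]
  exact variance_sum_autocorr_eq a hN

/-- exact expected squared error for `B = a_c + Σ_{m=0}^L a_m T_{p^m}`
under the `p`-th Chebyshev map, for `N ≥ L`. -/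
theorem chebyshev_error_variance_formula
    (L : ℕ) (ac : ℝ) (a : ℕ → ℝ) (p : ℕ) (hp : 2 ≤ p)
    (B : ℝ → ℝ)
    (hB : ∀ x, B x = ac + ∑ m ∈ range (L + 1), a m * (T ℝ (p ^ m : ℕ)).eval x)
    (σ : ℕ → ℝ)
    (hσ : ∀ N : ℕ, σ N =
      (1 / (N : ℝ)) *
        ((∫ x in Set.Icc (-1 : ℝ) 1, B x ^ 2 * (1 / (Real.pi * Real.sqrt (1 - x ^ 2))))
          - (∫ x in Set.Icc (-1 : ℝ) 1, B x * (1 / (Real.pi * Real.sqrt (1 - x ^ 2)))) ^ 2)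
      + (2 / (N : ℝ) ^ 2) * ∑ l ∈ Icc 1 N, ((N : ℝ) - (l : ℝ)) *
          ((∫ x in Set.Icc (-1 : ℝ) 1,
              B x * B ((T ℝ (p ^ l : ℕ)).eval x) * (1 / (Real.pi * Real.sqrt (1 - x ^ 2))))
            - (∫ x in Set.Icc (-1 : ℝ) 1, B x * (1 / (Real.pi * Real.sqrt (1 - x ^ 2)))) ^ 2))
    (N : ℕ) (hN : L ≤ N) (hN1 : 1 ≤ N) :
    σ N = (1 / (2 * (N : ℝ))) * (∑ m ∈ range (L + 1), a m) ^ 2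
      - (1 / (N : ℝ) ^ 2) * ∑ l ∈ Icc 1 L, ∑ m ∈ Icc l L, (l : ℝ) * a m * a (m - l) :=
  chebyshev_error_variance_formula_general L ac a p hp B hB σ hσ N hN
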